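/- arXiv:2504.11717 — 4 statements merged into one kernel-verified Lean document; each statement's English description precedes it below -/
import Mathlib

section
/- The safety value function V is a valid discrete-time control barrier function on its 0-superlevel set: for every x with V(x) ≥ 0 and every α ∈ (0,1], there exists u ∈ U such that V(f(x,u)) − V(x) ≥ −α·V(x). -/
/-- the safety value function is a valid discrete-time CBF on
    its 0-superlevel set: for every `x` with `V(x) ≥ 0` and every
    `α ∈ (0,1]`, some `u` satisfies `V(f(x,u)) − V(x) ≥ −α·V(x)`. -/
theorem value_function_is_dcbf {X U : Type*} [Nonempty U]
    (f : X → U → X) (g : X → ℝ) (Q : X → U → ℝ) (V : X → ℝ)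
    (hmax : ∀ x, ∃ u, (∀ u', Q x u' ≤ Q x u) ∧ V x = Q x u)
    (hBell : ∀ x u, Q x u = min (g x) (V (f x u))) :
    ∀ x, 0 ≤ V x → ∀ α : ℝ, 0 < α → α ≤ 1 →
      ∃ u, -α * V x ≤ V (f x u) - V x := by
  intro x hVx α hα hα1
  obtain ⟨u, _, hVu⟩ := hmax x
  refine ⟨u, ?_⟩
  have h1 : V x ≤ V (f x u) := by
    rw [hVu, hBell]; exact min_le_right _ _
  nlinarith
end

section
/- Recursive feasibility of the human-centered safety filter: for any γ ∈ [0,1) and any initial state x₀ with V(x₀) ≥ 0, if at every timestep an action u_t ∈ U satisfying Q(x_t,u_t) ≥ γ·V(x_t) is applied (such an action always exists), then V(x_t) ≥ 0 for all t ∈ ℕ, i.e., the trajectory remains in the maximal safe set S* forever. -/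
/-- recursive feasibility of the HCSF: along any trajectory
    whose actions satisfy the Q-CBF constraint `Q(x_t,u_t) ≥ γ·V(x_t)`
    with `γ ∈ [0,1)`, starting from `V(x₀) ≥ 0`, we have `V(x_t) ≥ 0`
    for all `t` (and a feasible action always exists). -/
theorem hcsf_recursive_feasibility {X U : Type*} [Nonempty U]
    (f : X → U → X) (g : X → ℝ) (Q : X → U → ℝ) (V : X → ℝ)
    (hmax : ∀ x, ∃ u, (∀ u', Q x u' ≤ Q x u) ∧ V x = Q x u)
    (hBell : ∀ x u, Q x u = min (g x) (V (f x u)))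
    (γ : ℝ) (hγ0 : 0 ≤ γ) (hγ1 : γ < 1)
    (x : ℕ → X) (u : ℕ → U)
    (hdyn : ∀ t, x (t + 1) = f (x t) (u t))
    (hfeas : ∀ t, γ * V (x t) ≤ Q (x t) (u t))
    (hinit : 0 ≤ V (x 0)) :
    (∀ y, 0 ≤ V y → ∃ w, γ * V y ≤ Q y w) ∧ ∀ t, 0 ≤ V (x t) := by
  constructor
  · intro y hy
    obtain ⟨w, _, hw⟩ := hmax y
    exact ⟨w, hw ▸ mul_le_of_le_one_left hy hγ1.le⟩
  · intro t
    induction t with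
    | zero => exact hinit
    | succ n ih =>
      have h := hfeas n
      rw [hBell] at h
      have : 0 ≤ V (f (x n) (u n)) :=
        le_trans (mul_nonneg hγ0 ih) (h.trans (min_le_right _ _))
      rwa [hdyn]
end

section
/- Let (x_t) be generated by any policy satisfying the Q-CBF constraint Q(x_t,u_t) ≥ γ·V(x_t) with γ ∈ [0,1) from x₀ ∈ S*. Then V(x_{t+1}) ≥ γ·V(x_t) for all t, and hence V(x_t) ≥ γᵗ·V(x₀) ≥ 0 for all t ∈ ℕ. -/
/-- along any trajectory satisfying the Q-CBF constraint with
    `γ ∈ [0,1)` from `x₀ ∈ S*`, the value decays at most geometrically: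
    `V(x_{t+1}) ≥ γ·V(x_t)` and `V(x_t) ≥ γᵗ·V(x₀) ≥ 0`. -/
theorem qcbf_geometric_decay {X U : Type*} [Nonempty U]
    (f : X → U → X) (g : X → ℝ) (Q : X → U → ℝ) (V : X → ℝ)
    (hmax : ∀ x, ∃ u, (∀ u', Q x u' ≤ Q x u) ∧ V x = Q x u)
    (hBell : ∀ x u, Q x u = min (g x) (V (f x u)))
    (γ : ℝ) (hγ0 : 0 ≤ γ) (hγ1 : γ < 1)
    (x : ℕ → X) (u : ℕ → U)
    (hdyn : ∀ t, x (t + 1) = f (x t) (u t))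
    (hfeas : ∀ t, γ * V (x t) ≤ Q (x t) (u t))
    (hinit : 0 ≤ V (x 0)) :
    (∀ t, γ * V (x t) ≤ V (x (t + 1))) ∧
    (∀ t, γ ^ t * V (x 0) ≤ V (x t) ∧ 0 ≤ γ ^ t * V (x 0)) := by
  have hstep : ∀ t, γ * V (x t) ≤ V (x (t + 1)) := by
    intro t
    have h := hfeas t
    rw [hBell] at h
    calc γ * V (x t) ≤ min (g (x t)) (V (f (x t) (u t))) := h
      _ ≤ V (f (x t) (u t)) := min_le_right _ _
      _ = V (x (t + 1)) := by rw [hdyn]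
  refine ⟨hstep, ?_⟩
  intro t
  induction t with
  | zero => exact ⟨by simp, by simpa using hinit⟩
  | succ n ih =>
    constructor
    · calc γ ^ (n + 1) * V (x 0) = γ * (γ ^ n * V (x 0)) := by ring
        _ ≤ γ * V (x n) := by nlinarith [ih.1, ih.2]
        _ ≤ V (x (n + 1)) := hstep n
    · have := ih.2
      have : 0 ≤ γ * (γ ^ n * V (x 0)) := mul_nonneg hγ0 ih.2
      calc (0:ℝ) ≤ γ * (γ ^ n * V (x 0)) := this
        _ = γ ^ (n + 1) * V (x 0) := by ring
end

section
/- For all x and u, Q(x,u) ≤ g(x) and Q(x,u) ≤ V(f(x,u)); consequently, along any trajectory satisfying the Q-CBF constraint with γ ∈ [0,1) from x₀ ∈ S*, the margin satisfies g(x_t) ≥ γ·V(x_t) ≥ 0 for all t ≥ 1. -/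
/-- `Q(x,u) ≤ g(x)` and `Q(x,u) ≤ V(f(x,u))` for all `x,u`;
    hence along any trajectory satisfying the Q-CBF constraint with
    `γ ∈ [0,1)` from `x₀ ∈ S*`, the margin satisfies
    `g(x_t) ≥ γ·V(x_t) ≥ 0` for all `t ≥ 1`. -/
theorem q_bounds_and_margin {X U : Type*} [Nonempty U]
    (f : X → U → X) (g : X → ℝ) (Q : X → U → ℝ) (V : X → ℝ)
    (hmax : ∀ x, ∃ u, (∀ u', Q x u' ≤ Q x u) ∧ V x = Q x u)
    (hBell : ∀ x u, Q x u = min (g x) (V (f x u)))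
    (γ : ℝ) (hγ0 : 0 ≤ γ) (hγ1 : γ < 1)
    (x : ℕ → X) (u : ℕ → U)
    (hdyn : ∀ t, x (t + 1) = f (x t) (u t))
    (hfeas : ∀ t, γ * V (x t) ≤ Q (x t) (u t))
    (hinit : 0 ≤ V (x 0)) :
    (∀ y w, Q y w ≤ g y ∧ Q y w ≤ V (f y w)) ∧
    (∀ t, 1 ≤ t → γ * V (x t) ≤ g (x t) ∧ 0 ≤ γ * V (x t)) := by
  have hb : ∀ y w, Q y w ≤ g y ∧ Q y w ≤ V (f y w) := by
    intro y w
    rw [hBell]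
    exact ⟨min_le_left _ _, min_le_right _ _⟩
  have hV : ∀ t, 0 ≤ V (x t) := by
    intro t
    induction t with
    | zero => exact hinit
    | succ n ih =>
      have h1 : γ * V (x n) ≤ V (x (n + 1)) := by
        rw [hdyn n]
        exact le_trans (hfeas n) (hb _ _).2
      exact le_trans (mul_nonneg hγ0 ih) h1
  refine ⟨hb, fun t _ => ⟨le_trans (hfeas t) (hb _ _).1, mul_nonneg hγ0 (hV t)⟩⟩
end
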